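/- For every integer m ≥ 6 there exist a positive integer n and positive integers a₁,…,aₙ such that the sum of generalized m-gonal numbers f(x₁,…,xₙ) = ∑_{j=1}^n a_j P_m(x_j) represents every positive integer k with k ≤ m − 5, but does not represent m − 4. (In particular, the universality constant γ_m satisfies γ_m ≥ m − 4, so no bound uniform in m exists.) -/
import Mathlib


/-- The generalized `m`-gonal number `P_m(x) = ((m-2)x² - (m-4)x)/2`. -/
def polygonal (m x : ℤ) : ℤ := ((m - 2) * x ^ 2 - (m - 4) * x) / 2

/-- `Represents m a k` means the sum `∑ j, a j * P_m(x j)` represents the integer `k`. -/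
def Represents {n : ℕ} (m : ℤ) (a : Fin n → ℤ) (k : ℤ) : Prop :=
  ∃ x : Fin n → ℤ, ∑ j, a j * polygonal m (x j) = k

lemma polygonal_eq (m x : ℤ) : ∃ c : ℤ, 2 * c = x ^ 2 - x ∧ polygonal m x = (m - 2) * c + x := by
  obtain ⟨c, hc⟩ := (Int.even_mul_succ_self (x - 1)).two_dvd
  refine ⟨c, by linear_combination -hc, ?_⟩
  have he : (m - 2) * x ^ 2 - (m - 4) * x = 2 * ((m - 2) * c + x) := by linear_combination (m - 2) * hc
  rw [polygonal, he, Int.mul_ediv_cancel_left _ (by norm_num)]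

lemma polygonal_zero (m : ℤ) : polygonal m 0 = 0 := by simp [polygonal]

lemma polygonal_one (m : ℤ) : polygonal m 1 = 1 := by
  simp only [polygonal, one_pow, mul_one]
  omega

lemma polygonal_cases (m x : ℤ) (hm : 6 ≤ m) :
    polygonal m x = 0 ∨ polygonal m x = 1 ∨ m - 3 ≤ polygonal m x := by
  obtain ⟨c, hc, hp⟩ := polygonal_eq m x
  rcases eq_or_ne x 0 with rfl | hx0
  · left; rw [polygonal_zero]
  rcases eq_or_ne x 1 with rfl | hx1
  · right; left; exact polygonal_one m
  · right; right
    rw [hp]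
    rcases lt_or_ge x 0 with hx | hx
    · nlinarith [sq_nonneg (x + 1)]
    · have h2 : 2 ≤ x := by omega
      nlinarith [sq_nonneg (x - 2)]

lemma polygonal_nonneg (m x : ℤ) (hm : 6 ≤ m) : 0 ≤ polygonal m x := by
  rcases polygonal_cases m x hm with h | h | h <;> omega

/-- Theorem 1 (2): γ_m ≥ m - 4. For every m ≥ 6 there is a sum of generalized m-gonal
numbers representing every positive integer k ≤ m - 5 but not representing m - 4. -/
theorem gamma_lower_bound (m : ℤ) (hm : 6 ≤ m) :
    ∃ (n : ℕ) (_ : 0 < n) (a : Fin n → ℤ) (_ : ∀ j, 0 < a j),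
      (∀ k : ℤ, 1 ≤ k → k ≤ m - 5 → Represents m a k) ∧ ¬ Represents m a (m - 4) := by
  set n : ℕ := (m - 5).toNat with hn
  have hncast : (n : ℤ) = m - 5 := Int.toNat_of_nonneg (by omega)
  refine ⟨n, by omega, fun _ => 1, fun _ => one_pos, ?_, ?_⟩
  · intro k hk1 hk2
    set t : ℕ := k.toNat with ht
    have htcast : (t : ℤ) = k := Int.toNat_of_nonneg (by omega)
    have htn : t ≤ n := by omega
    refine ⟨fun j => if (j : ℕ) < t then 1 else 0, ?_⟩
    have : ∀ j : Fin n, (1 : ℤ) * polygonal m (if (j : ℕ) < t then 1 else 0)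
        = if (j : ℕ) < t then 1 else 0 := by
      intro j
      rw [one_mul, apply_ite (polygonal m), polygonal_zero, polygonal_one]
    rw [Finset.sum_congr rfl fun j _ => this j]
    rw [Fin.sum_univ_eq_sum_range (fun i => if i < t then (1 : ℤ) else 0) n]
    have hfil : (Finset.range n).filter (· < t) = Finset.range t := by
      ext i; simp; omega
    rw [Finset.sum_ite, Finset.sum_const, Finset.sum_const_zero, hfil]
    simp [htcast]
  · rintro ⟨x, hx⟩
    simp only [one_mul] at hx
    by_cases hbig : ∃ j, m - 3 ≤ polygonal m (x j)
    · obtain ⟨j, hj⟩ := hbig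
      have hle : polygonal m (x j) ≤ ∑ i, polygonal m (x i) :=
        Finset.single_le_sum (fun i _ => polygonal_nonneg m (x i) hm) (Finset.mem_univ j)
      omega
    · push_neg at hbig
      have hsmall : ∀ j, polygonal m (x j) ≤ 1 := by
        intro j
        rcases polygonal_cases m (x j) hm with h | h | h
        · omega
        · omega
        · exact absurd h (not_le.mpr (hbig j))
      have hsum : ∑ i, polygonal m (x i) ≤ (n : ℤ) * 1 := by
        calc ∑ i, polygonal m (x i) ≤ ∑ _i : Fin n, (1 : ℤ) :=
              Finset.sum_le_sum fun i _ => hsmall i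
          _ = (n : ℤ) * 1 := by simp
      rw [hx] at hsum
      omega
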